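/- arXiv:1806.03763 — 2 statements merged into one kernel-verified Lean document; each statement's English description precedes it below -/
import Mathlib

section
/- Let 𝕂 = ℝ or ℂ, suppose the smooth-manifold assumption holds, and let Y ∈ ℳ_k. Then for every Z ∈ 𝕂^{n×k}, the orthogonal projection of Z onto the real subspace T_Y (with respect to the inner product ⟨·,·⟩) equals Z − 𝒜*(G(Y)†𝒜(ZY*))·Y; equivalently, Z − 𝒜*(G(Y)†𝒜(ZY*))·Y lies in T_Y and 𝒜*(G(Y)†𝒜(ZY*))·Y is orthogonal to every element of T_Y. -/
open scoped Matrix BigOperators ComplexOrder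
open MeasureTheory ProbabilityTheory

noncomputable section

namespace SmoothedBM

variable {𝕂 : Type*} [RCLike 𝕂]

/-- Real Frobenius inner product `⟨A,B⟩ = Re tr(Aᴴ B)`. -/
def finner {n k : ℕ} (A B : Matrix (Fin n) (Fin k) 𝕂) : ℝ :=
  RCLike.re (Matrix.trace (Aᴴ * B))

/-- Frobenius norm. -/
def fnorm {n k : ℕ} (A : Matrix (Fin n) (Fin k) 𝕂) : ℝ :=
  Real.sqrt (finner A A)

/-- Spectral (operator) norm: the largest singular value, i.e. the square root of the
largest eigenvalue of `Aᴴ * A`. -/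
def opNorm {n k : ℕ} (A : Matrix (Fin n) (Fin k) 𝕂) : ℝ :=
  ⨆ i, Real.sqrt ((Matrix.isHermitian_conjTranspose_mul_self A).eigenvalues i)

/-- The `k`-th (smallest) singular value of an `n × k` matrix: the square root of the
smallest eigenvalue of `Yᴴ * Y`.  (It is `0` when `k > n`.) -/
def sigmaLast {n k : ℕ} (Y : Matrix (Fin n) (Fin k) 𝕂) : ℝ :=
  Real.sqrt (⨅ i, (Matrix.isHermitian_conjTranspose_mul_self Y).eigenvalues i)

/-- Squared singular values of an `n × n` matrix, sorted in increasing order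
(eigenvalues of `Aᴴ * A`, sorted). -/
def svSqAsc {n : ℕ} (A : Matrix (Fin n) (Fin n) 𝕂) : Fin n → ℝ := fun i =>
  (Matrix.isHermitian_conjTranspose_mul_self A).eigenvalues
    (Tuple.sort ((Matrix.isHermitian_conjTranspose_mul_self A).eigenvalues) i)

/-- Sum of the squares of the `k` smallest singular values of an `n × n` matrix. -/
def sumSqSmallestSV {n : ℕ} (k : ℕ) (A : Matrix (Fin n) (Fin n) 𝕂) : ℝ :=
  ∑ i : Fin n, if (i : ℕ) < k then svSqAsc A i else 0

open Classical in
/-- Smallest eigenvalue of a self-adjoint matrix (junk value `0` if not self-adjoint). -/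
def lambdaMin {n : ℕ} (A : Matrix (Fin n) (Fin n) 𝕂) : ℝ :=
  if hA : A.IsHermitian then ⨅ i, hA.eigenvalues i else 0

open Classical in
/-- Number of eigenvalues of a self-adjoint matrix lying in a set `I ⊆ ℝ`
(junk value `0` if not self-adjoint). -/
def eigCountIn {n : ℕ} (A : Matrix (Fin n) (Fin n) 𝕂) (I : Set ℝ) : ℕ :=
  if hA : A.IsHermitian then (Finset.univ.filter fun i => hA.eigenvalues i ∈ I).card else 0

variable {n m k : ℕ}

/-- The constraint map `𝒜(Z)ᵢ = ⟨Aᵢ, Z⟩`. -/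
def calA (A : Fin m → Matrix (Fin n) (Fin n) 𝕂) (Z : Matrix (Fin n) (Fin n) 𝕂) :
    Fin m → ℝ := fun i => finner (A i) Z

/-- The adjoint map `𝒜*(μ) = ∑ᵢ μᵢ Aᵢ`. -/
def calAstar (A : Fin m → Matrix (Fin n) (Fin n) 𝕂) (μ : Fin m → ℝ) :
    Matrix (Fin n) (Fin n) 𝕂 := ∑ i, (μ i : 𝕂) • A i

/-- The SDP feasible set `𝒞`. -/
def SDPSet (A : Fin m → Matrix (Fin n) (Fin n) 𝕂) (b : Fin m → ℝ) :
    Set (Matrix (Fin n) (Fin n) 𝕂) :=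
  {X | X.PosSemidef ∧ ∀ i, finner (A i) X = b i}

/-- The factorized feasible set `ℳ_k`. -/
def FactSet (A : Fin m → Matrix (Fin n) (Fin n) 𝕂) (b : Fin m → ℝ) (k : ℕ) :
    Set (Matrix (Fin n) (Fin k) 𝕂) :=
  {Y | ∀ i, finner (A i) (Y * Yᴴ) = b i}

/-- The Gram matrix `G(Y)ᵢⱼ = ⟨AᵢY, AⱼY⟩`. -/
def gram (A : Fin m → Matrix (Fin n) (Fin n) 𝕂) (Y : Matrix (Fin n) (Fin k) 𝕂) :
    Matrix (Fin m) (Fin m) ℝ :=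
  Matrix.of fun i j => finner (A i * Y) (A j * Y)

/-- The four Moore–Penrose identities. -/
def IsMoorePenrose {m : ℕ} (G H : Matrix (Fin m) (Fin m) ℝ) : Prop :=
  G * H * G = G ∧ H * G * H = H ∧ (G * H)ᵀ = G * H ∧ (H * G)ᵀ = H * G

open Classical in
/-- The Moore–Penrose pseudo-inverse (the unique matrix satisfying the four
Moore–Penrose identities; junk value `0` if none exists). -/
def pinv {m : ℕ} (G : Matrix (Fin m) (Fin m) ℝ) : Matrix (Fin m) (Fin m) ℝ :=
  if h : ∃ H, IsMoorePenrose G H then h.choose else 0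

/-- The matrix `S(Y) = C − 𝒜*(G(Y)† 𝒜(C Y Yᴴ))`. -/
def Smat (A : Fin m → Matrix (Fin n) (Fin n) 𝕂) (C : Matrix (Fin n) (Fin n) 𝕂)
    (Y : Matrix (Fin n) (Fin k) 𝕂) : Matrix (Fin n) (Fin n) 𝕂 :=
  C - calAstar A (pinv (gram A Y) *ᵥ calA A (C * (Y * Yᴴ)))

/-- `Y` is an `εg`-approximate first-order stationary point of the factorized problem. -/
def IsFOSP (A : Fin m → Matrix (Fin n) (Fin n) 𝕂) (b : Fin m → ℝ)
    (C : Matrix (Fin n) (Fin n) 𝕂) (Y : Matrix (Fin n) (Fin k) 𝕂) (εg : ℝ) : Prop :=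
  Y ∈ FactSet A b k ∧ fnorm ((2 : 𝕂) • (Smat A C Y * Y)) ≤ εg

/-- `Y` is an `(εg, εH)`-approximate second-order stationary point of the factorized problem. -/
def IsSOSP (A : Fin m → Matrix (Fin n) (Fin n) 𝕂) (b : Fin m → ℝ)
    (C : Matrix (Fin n) (Fin n) 𝕂) (Y : Matrix (Fin n) (Fin k) 𝕂) (εg εH : ℝ) : Prop :=
  IsFOSP A b C Y εg ∧
    ∀ V : Matrix (Fin n) (Fin k) 𝕂, (∀ i, finner (A i * Y) V = 0) →
      -εH * (fnorm V) ^ 2 ≤ finner V (Smat A C Y * V)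

/-- The smooth-manifold assumption (Assumption 1). -/
def SmoothAssumption (A : Fin m → Matrix (Fin n) (Fin n) 𝕂) (b : Fin m → ℝ) : Prop :=
  ∀ k' : ℕ, k' ≤ n → (FactSet A b k').Nonempty →
    (∀ Y ∈ FactSet A b k', LinearIndependent ℝ fun i => A i * Y) ∨
    (∃ U : Set (Matrix (Fin n) (Fin k') 𝕂), IsOpen U ∧ FactSet A b k' ⊆ U ∧
      ∃ d : ℕ, ∀ Y ∈ U,
        Module.finrank ℝ (Submodule.span ℝ (Set.range fun i => A i * Y)) = d)

/-- A real Gaussian Wigner matrix with variance `σ²`: a random real symmetric matrix whose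
on-and-above-diagonal entries are independent centered Gaussians `N(0, σ²)`. -/
structure IsRealWigner {Ω : Type*} [MeasurableSpace Ω] (μ : Measure Ω) {n : ℕ} (σ : ℝ)
    (W : Ω → Matrix (Fin n) (Fin n) ℝ) : Prop where
  symm : ∀ ω, (W ω)ᵀ = W ω
  meas : ∀ i j, Measurable fun ω => W ω i j
  indep : iIndepFun
    (fun (p : {p : Fin n × Fin n // p.1 ≤ p.2}) ω => W ω p.val.1 p.val.2) μ
  gauss : ∀ i j : Fin n, i ≤ j →
    Measure.map (fun ω => W ω i j) μ = gaussianReal 0 ⟨σ ^ 2, sq_nonneg σ⟩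

/-- The independent real coordinates of a complex Hermitian random matrix:
diagonal entries, and real/imaginary parts of the above-diagonal entries. -/
def wignerParts {Ω : Type*} {n : ℕ} (W : Ω → Matrix (Fin n) (Fin n) ℂ) :
    (Fin n ⊕ {p : Fin n × Fin n // p.1 < p.2} × Bool) → Ω → ℝ
  | Sum.inl i => fun ω => (W ω i i).re
  | Sum.inr (p, false) => fun ω => (W ω p.val.1 p.val.2).re
  | Sum.inr (p, true) => fun ω => (W ω p.val.1 p.val.2).im

/-- A complex Gaussian Wigner matrix with variance `σ²`: a random Hermitian matrix whose
on-and-above-diagonal entries are independent, the diagonal entries being real `N(0, σ²)` and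
the above-diagonal entries having independent `N(0, σ²/2)` real and imaginary parts. -/
structure IsComplexWigner {Ω : Type*} [MeasurableSpace Ω] (μ : Measure Ω) {n : ℕ} (σ : ℝ)
    (W : Ω → Matrix (Fin n) (Fin n) ℂ) : Prop where
  herm : ∀ ω, (W ω).IsHermitian
  meas : ∀ i j, Measurable fun ω => W ω i j
  indep : iIndepFun
    (wignerParts W) μ
  diag : ∀ i : Fin n,
    Measure.map (fun ω => (W ω i i).re) μ = gaussianReal 0 ⟨σ ^ 2, sq_nonneg σ⟩
  off_re : ∀ i j : Fin n, i < j →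
    Measure.map (fun ω => (W ω i j).re) μ = gaussianReal 0 ⟨σ ^ 2 / 2, by positivity⟩
  off_im : ∀ i j : Fin n, i < j →
    Measure.map (fun ω => (W ω i j).im) μ = gaussianReal 0 ⟨σ ^ 2 / 2, by positivity⟩

/-!
Put `v i = A i * Y`. Then `𝒜(Z Yᴴ)` is the vector `c` of the inner products `⟨v i, Z⟩`, `G(Y)`
is the Gram matrix of `v`, and `𝒜*(μ) Y = ∑ μ_j v_j`, so the claim is that `∑ (G† c)_j v_j` is
the orthogonal projection of `Z` onto the span of the `v i`. The residual `w = c - G G† c` of the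
normal equations is killed by `G`, because `G G† G = G` and `G G†` is symmetric; hence
`∑ w_j v_j` has norm `wᵀ G w = 0` and vanishes. On the other hand `w_i = ⟨v i, Z - ∑ (G† c)_j v_j⟩`,
so `|w|² = ⟨∑ w_j v_j, Z - ∑ (G† c)_j v_j⟩ = 0`. For symmetric `G` a Moore–Penrose inverse
exists: apply the functional calculus to `x ↦ x⁻¹` (with `0⁻¹ = 0`).
-/

section MoorePenrose

variable {G : Matrix (Fin m) (Fin m) ℝ}

theorem isMoorePenrose_cfc_inv (hG : G.IsSymm) :
    IsMoorePenrose G (cfc (fun x : ℝ => x⁻¹) G) := by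
  have hsa : IsSelfAdjoint G := Matrix.isHermitian_iff_isSymm.mpr hG
  have hcont (f : ℝ → ℝ) : ContinuousOn f (spectrum ℝ G) :=
    Matrix.finite_real_spectrum.continuousOn f
  have hmul (f g : ℝ → ℝ) : cfc f G * cfc g G = cfc (fun x => f x * g x) G :=
    (cfc_mul f g G (hcont f) (hcont g)).symm
  have hsymm (f : ℝ → ℝ) : (cfc f G)ᵀ = cfc f G := by
    rw [← Matrix.conjTranspose_eq_transpose_of_trivial]
    exact cfc_predicate f G
  have hmul₃ (f g h : ℝ → ℝ) :
      cfc f G * cfc g G * cfc h G = cfc (fun x => f x * g x * h x) G := by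
    rw [hmul, hmul]
  have hid : cfc (fun x => x) G = G := cfc_id' ℝ G hsa
  refine ⟨?_, ?_, ?_, ?_⟩
  · simpa only [mul_inv_mul_cancel, hid] using hmul₃ (fun x => x) (·⁻¹) (fun x => x)
  · have hinv (x : ℝ) : x⁻¹ * x * x⁻¹ = x⁻¹ := by
      simpa only [inv_inv] using mul_inv_mul_cancel x⁻¹
    simpa only [hinv, hid] using hmul₃ (·⁻¹) (fun x => x) (·⁻¹)
  · simpa only [← hmul, hid] using hsymm (fun x => x * x⁻¹)
  · simpa only [← hmul, hid] using hsymm (fun x => x⁻¹ * x)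

theorem isMoorePenrose_pinv (hG : G.IsSymm) : IsMoorePenrose G (pinv G) := by
  have h : ∃ H, IsMoorePenrose G H := ⟨_, isMoorePenrose_cfc_inv hG⟩
  rw [pinv, dif_pos h]
  exact h.choose_spec

end MoorePenrose

section GramProjection

variable {E : Type*} [AddCommGroup E] [Module ℝ E] (B : LinearMap.BilinForm ℝ E) (v : Fin m → E)

def bilinGram : Matrix (Fin m) (Fin m) ℝ :=
  Matrix.of fun i j => B (v i) (v j)

def gramProj (H : Matrix (Fin m) (Fin m) ℝ) (z : E) : E :=
  ∑ j, (H *ᵥ fun l => B (v l) z) j • v j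

variable {B}

theorem bilinGram_isSymm (hB : B.IsSymm) : (bilinGram B v).IsSymm :=
  Matrix.IsSymm.ext fun i j => hB.eq (v j) (v i)

theorem apply_sum_smul (w : Fin m → ℝ) (x : E) :
    B (∑ j, w j • v j) x = ∑ j, w j * B (v j) x := by
  simp only [map_sum, map_smul, LinearMap.sum_apply, LinearMap.smul_apply, smul_eq_mul]

theorem bilinGram_mulVec (w : Fin m → ℝ) (i : Fin m) :
    (bilinGram B v *ᵥ w) i = B (v i) (∑ j, w j • v j) := by
  simp only [Matrix.mulVec, dotProduct, bilinGram, Matrix.of_apply, map_sum, map_smul,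
    smul_eq_mul, mul_comm]

theorem sum_smul_eq_zero_of_bilinGram_mulVec_eq_zero (hB : B.toQuadraticMap.Anisotropic)
    {w : Fin m → ℝ} (hw : bilinGram B v *ᵥ w = 0) : ∑ j, w j • v j = 0 := by
  apply hB
  rw [LinearMap.BilinMap.toQuadraticMap_apply, apply_sum_smul]
  simp only [← bilinGram_mulVec, hw, Pi.zero_apply, mul_zero, Finset.sum_const_zero]

theorem apply_sub_gramProj_eq_zero (hBs : B.IsSymm) (hB : B.toQuadraticMap.Anisotropic)
    {H : Matrix (Fin m) (Fin m) ℝ} (hGHG : bilinGram B v * H * bilinGram B v = bilinGram B v)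
    (hGH : (bilinGram B v * H)ᵀ = bilinGram B v * H) (z : E) (i : Fin m) :
    B (v i) (z - gramProj B v H z) = 0 := by
  set G := bilinGram B v
  set c : Fin m → ℝ := fun l => B (v l) z
  set w : Fin m → ℝ := fun l => B (v l) (z - gramProj B v H z)
  have hw : w = c - G *ᵥ (H *ᵥ c) := by
    ext l
    simp only [w, c, G, gramProj, map_sub, bilinGram_mulVec, Pi.sub_apply]
  have hGGH : G * (G * H) = G := by
    have hG : Gᵀ = G := (bilinGram_isSymm v hBs).eq
    simpa only [Matrix.transpose_mul, hGH, hG] using congrArg Matrix.transpose hGHG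
  have hGw : G *ᵥ w = 0 := by
    rw [hw, Matrix.mulVec_sub, Matrix.mulVec_mulVec, Matrix.mulVec_mulVec, Matrix.mul_assoc,
      hGGH, sub_self]
  have hww : w ⬝ᵥ w = 0 := by
    calc w ⬝ᵥ w = B (∑ j, w j • v j) (z - gramProj B v H z) := by
          rw [apply_sum_smul]; rfl
      _ = 0 := by
          rw [sum_smul_eq_zero_of_bilinGram_mulVec_eq_zero v hB hGw, map_zero,
            LinearMap.zero_apply]
  exact congrFun (dotProduct_self_eq_zero.mp hww) i

theorem apply_gramProj_eq_zero {x : E} (hx : ∀ i, B (v i) x = 0) (H : Matrix (Fin m) (Fin m) ℝ)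
    (z : E) : B (gramProj B v H z) x = 0 := by
  simp only [gramProj, apply_sum_smul, hx, mul_zero, Finset.sum_const_zero]

end GramProjection

section Frobenius

theorem finner_comm (X W : Matrix (Fin n) (Fin k) 𝕂) : finner X W = finner W X := by
  rw [finner, finner, ← Matrix.conjTranspose_conjTranspose (Wᴴ * X), Matrix.trace_conjTranspose,
    Matrix.conjTranspose_mul, Matrix.conjTranspose_conjTranspose, RCLike.star_def, RCLike.conj_re]

def finnerForm : LinearMap.BilinForm ℝ (Matrix (Fin n) (Fin k) 𝕂) :=
  LinearMap.mk₂ ℝ finner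
    (fun X X' W => by
      simp only [finner, Matrix.conjTranspose_add, Matrix.add_mul, Matrix.trace_add, map_add])
    (fun r X W => by
      simp only [finner, Matrix.conjTranspose_smul, star_trivial, Matrix.smul_mul,
        Matrix.trace_smul, RCLike.smul_re, smul_eq_mul])
    (fun X W W' => by simp only [finner, Matrix.mul_add, Matrix.trace_add, map_add])
    (fun r X W => by
      simp only [finner, Matrix.mul_smul, Matrix.trace_smul, RCLike.smul_re, smul_eq_mul])

theorem finnerForm_isSymm : (finnerForm (𝕂 := 𝕂) (n := n) (k := k)).IsSymm :=
  ⟨finner_comm⟩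

theorem finnerForm_anisotropic :
    (finnerForm (𝕂 := 𝕂) (n := n) (k := k)).toQuadraticMap.Anisotropic := by
  intro X hX
  have hre : RCLike.re (Xᴴ * X).trace = 0 := hX
  have hnonneg : 0 ≤ (Xᴴ * X).trace := (Matrix.posSemidef_conjTranspose_mul_self X).trace_nonneg
  refine Matrix.trace_conjTranspose_mul_self_eq_zero_iff.mp ?_
  rw [← RCLike.re_add_im (Xᴴ * X).trace, hre, (RCLike.nonneg_iff.mp hnonneg).2]
  simp

theorem calA_mul_conjTranspose (A : Fin m → Matrix (Fin n) (Fin n) 𝕂)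
    (Y Z : Matrix (Fin n) (Fin k) 𝕂) : calA A (Z * Yᴴ) = fun i => finner (A i * Y) Z := by
  ext i
  rw [calA, finner, finner, Matrix.conjTranspose_mul, ← Matrix.mul_assoc, Matrix.trace_mul_comm,
    ← Matrix.mul_assoc]

theorem calAstar_mul (A : Fin m → Matrix (Fin n) (Fin n) 𝕂) (μ : Fin m → ℝ)
    (Y : Matrix (Fin n) (Fin k) 𝕂) : calAstar A μ * Y = ∑ j, μ j • (A j * Y) := by
  simp only [calAstar, Matrix.sum_mul, Matrix.smul_mul, RCLike.real_smul_eq_coe_smul (K := 𝕂)]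

end Frobenius

theorem orthogonal_projection_formula_general
    {𝕂 : Type*} [RCLike 𝕂] {n m k : ℕ}
    (A : Fin m → Matrix (Fin n) (Fin n) 𝕂)
    (Y : Matrix (Fin n) (Fin k) 𝕂)
    (Z : Matrix (Fin n) (Fin k) 𝕂) :
    (∀ i, finner (A i * Y)
        (Z - calAstar A (pinv (gram A Y) *ᵥ calA A (Z * Yᴴ)) * Y) = 0) ∧
    (∀ V : Matrix (Fin n) (Fin k) 𝕂, (∀ i, finner (A i * Y) V = 0) →
        finner (calAstar A (pinv (gram A Y) *ᵥ calA A (Z * Yᴴ)) * Y) V = 0) := by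
  set v : Fin m → Matrix (Fin n) (Fin k) 𝕂 := fun i => A i * Y
  have hgram : gram A Y = bilinGram finnerForm v := rfl
  have hproj : calAstar A (pinv (gram A Y) *ᵥ calA A (Z * Yᴴ)) * Y =
      gramProj finnerForm v (pinv (gram A Y)) Z := by
    rw [calAstar_mul, calA_mul_conjTranspose]
    rfl
  obtain ⟨hGHG, -, hGH, -⟩ := isMoorePenrose_pinv (bilinGram_isSymm v finnerForm_isSymm)
  rw [hproj, hgram]
  exact ⟨apply_sub_gramProj_eq_zero v finnerForm_isSymm finnerForm_anisotropic hGHG hGH Z,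
    fun V hV => apply_gramProj_eq_zero (B := finnerForm) v hV _ Z⟩

/-- Lemma 1, projection formula: `Z − 𝒜*(G(Y)†𝒜(ZY*))Y` lies in the
tangent space `T_Y` and `𝒜*(G(Y)†𝒜(ZY*))Y` is orthogonal to every element of `T_Y`. -/
theorem orthogonal_projection_formula
    {𝕂 : Type*} [RCLike 𝕂] {n m k : ℕ} (hn : 0 < n) (hm : 0 < m) (hk : 0 < k)
    (A : Fin m → Matrix (Fin n) (Fin n) 𝕂) (hA : ∀ i, (A i).IsHermitian)
    (b : Fin m → ℝ) (hsm : SmoothAssumption A b)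
    (Y : Matrix (Fin n) (Fin k) 𝕂) (hY : Y ∈ FactSet A b k)
    (Z : Matrix (Fin n) (Fin k) 𝕂) :
    (∀ i, finner (A i * Y)
        (Z - calAstar A (pinv (gram A Y) *ᵥ calA A (Z * Yᴴ)) * Y) = 0) ∧
    (∀ V : Matrix (Fin n) (Fin k) 𝕂, (∀ i, finner (A i * Y) V = 0) →
        finner (calAstar A (pinv (gram A Y) *ᵥ calA A (Z * Yᴴ)) * Y) V = 0) :=
  orthogonal_projection_formula_general A Y Z

end SmoothedBM
end
end

section
/- Let 𝕂 = ℝ or ℂ. Let C ∈ S^{n×n}, let μ ∈ ℝ^m, and set S = C − 𝒜*(μ). Then for every Y ∈ ℳ_k (i.e. 𝒜(YY*) = b) and every X' ∈ 𝒞 (i.e. X' ⪰ 0 and 𝒜(X') = b): ⟨C, YY*⟩ − ⟨C, X'⟩ ≤ −λ_min(S)·tr(X') + ⟨SY, Y⟩. -/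
open scoped Matrix BigOperators ComplexOrder
open MeasureTheory ProbabilityTheory

noncomputable section

namespace SmoothedBM

variable {𝕂 : Type*} [RCLike 𝕂]

variable {n m k : ℕ}

/-
The multipliers `lam` enter only through `𝒜*(lam)`, whose pairings with `Y Yᴴ` and with `X'`
both equal `∑ lamᵢ bᵢ`; so replacing `C` by `S = C − 𝒜*(lam)` leaves the gap unchanged, and
`⟨S, Y Yᴴ⟩ = ⟨S Y, Y⟩`. It remains to bound `⟨S, X'⟩ ≥ λ_min(S) tr X'`, which holds because
`S − λ_min(S) I ⪰ 0` and the Frobenius pairing of two positive semidefinite matrices is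
nonnegative.
-/

lemma finner_sub_left (A B Z : Matrix (Fin n) (Fin k) 𝕂) :
    finner (A - B) Z = finner A Z - finner B Z := by
  simp [finner, Matrix.conjTranspose_sub, Matrix.sub_mul]

lemma finner_ofReal_smul_left (r : ℝ) (A B : Matrix (Fin n) (Fin k) 𝕂) :
    finner ((r : 𝕂) • A) B = r * finner A B := by
  rw [finner, finner, Matrix.conjTranspose_smul, RCLike.star_def, RCLike.conj_ofReal,
    Matrix.smul_mul, Matrix.trace_smul, smul_eq_mul, RCLike.re_ofReal_mul]

lemma finner_sum_left {ι : Type*} (s : Finset ι) (A : ι → Matrix (Fin n) (Fin k) 𝕂)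
    (B : Matrix (Fin n) (Fin k) 𝕂) :
    finner (∑ i ∈ s, A i) B = ∑ i ∈ s, finner (A i) B := by
  simp [finner, Matrix.conjTranspose_sum, Matrix.sum_mul, Matrix.trace_sum]

lemma finner_mul_conjTranspose (S : Matrix (Fin n) (Fin n) 𝕂) (Y : Matrix (Fin n) (Fin k) 𝕂) :
    finner S (Y * Yᴴ) = finner (S * Y) Y := by
  rw [finner, finner, Matrix.conjTranspose_mul, ← Matrix.mul_assoc,
    Matrix.trace_mul_comm (Sᴴ * Y), ← Matrix.mul_assoc]

lemma calAstar_isHermitian {A : Fin m → Matrix (Fin n) (Fin n) 𝕂}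
    (hA : ∀ i, (A i).IsHermitian) (lam : Fin m → ℝ) : (calAstar A lam).IsHermitian :=
  (isSelfAdjoint_sum _ fun i _ =>
    ((hA i).smul (RCLike.conj_ofReal (lam i))).isSelfAdjoint).isHermitian

lemma finner_calAstar (A : Fin m → Matrix (Fin n) (Fin n) 𝕂) (lam : Fin m → ℝ)
    (Z : Matrix (Fin n) (Fin n) 𝕂) :
    finner (calAstar A lam) Z = ∑ i, lam i * finner (A i) Z := by
  simp only [calAstar, finner_sum_left, finner_ofReal_smul_left]

lemma finner_calAstar_eq_of_calA_eq {A : Fin m → Matrix (Fin n) (Fin n) 𝕂}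
    {X Z : Matrix (Fin n) (Fin n) 𝕂} (h : calA A X = calA A Z) (lam : Fin m → ℝ) :
    finner (calAstar A lam) X = finner (calAstar A lam) Z := by
  simp only [finner_calAstar]
  exact Finset.sum_congr rfl fun i _ => congrArg (lam i * ·) (congrFun h i)

section Spectral

open scoped MatrixOrder

lemma finner_nonneg_of_posSemidef {P X : Matrix (Fin n) (Fin n) 𝕂} (hP : P.PosSemidef)
    (hX : X.PosSemidef) : 0 ≤ finner P X := by
  have hP₀ : 0 ≤ P := Matrix.nonneg_iff_posSemidef.mpr hP
  have hsqrt : (CFC.sqrt P)ᴴ = CFC.sqrt P := (CFC.sqrt_nonneg P).isSelfAdjoint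
  have hconj : (CFC.sqrt P * X * CFC.sqrt P).PosSemidef := by
    simpa only [hsqrt] using hX.conjTranspose_mul_mul_same (CFC.sqrt P)
  rw [finner, hP.isHermitian.eq, ← CFC.sqrt_mul_sqrt_self P hP₀, Matrix.mul_assoc,
    Matrix.trace_mul_comm]
  exact (RCLike.nonneg_iff.mp hconj.trace_nonneg).1

lemma lambdaMin_le_eigenvalues {S : Matrix (Fin n) (Fin n) 𝕂} (hS : S.IsHermitian) (i : Fin n) :
    lambdaMin S ≤ hS.eigenvalues i := by
  rw [lambdaMin, dif_pos hS]
  exact ciInf_le (Set.finite_range _).bddBelow i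

lemma algebraMap_lambdaMin_le {S : Matrix (Fin n) (Fin n) 𝕂} (hS : S.IsHermitian) :
    algebraMap ℝ _ (lambdaMin S) ≤ S := by
  rw [algebraMap_le_iff_le_spectrum (a := S) hS.isSelfAdjoint,
    hS.spectrum_real_eq_range_eigenvalues]
  rintro _ ⟨i, rfl⟩
  exact lambdaMin_le_eigenvalues hS i

lemma lambdaMin_mul_re_trace_le {S X : Matrix (Fin n) (Fin n) 𝕂} (hS : S.IsHermitian)
    (hX : X.PosSemidef) : lambdaMin S * RCLike.re X.trace ≤ finner S X := by
  have hshift : (S - (lambdaMin S : 𝕂) • 1).PosSemidef := by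
    have h := algebraMap_lambdaMin_le hS
    rwa [Matrix.le_iff, Algebra.algebraMap_eq_smul_one,
      RCLike.real_smul_eq_coe_smul (K := 𝕂)] at h
  have htrace : finner ((lambdaMin S : 𝕂) • 1) X = lambdaMin S * RCLike.re X.trace := by
    rw [finner_ofReal_smul_left, finner, Matrix.conjTranspose_one, Matrix.one_mul]
  have hnonneg := finner_nonneg_of_posSemidef hshift hX
  rw [finner_sub_left, htrace] at hnonneg
  linarith

end Spectral

theorem gap_bound_via_lambdaMin_general
    {𝕂 : Type*} [RCLike 𝕂] {n m k : ℕ}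
    (A : Fin m → Matrix (Fin n) (Fin n) 𝕂) (hA : ∀ i, (A i).IsHermitian)
    (b : Fin m → ℝ)
    (C : Matrix (Fin n) (Fin n) 𝕂) (hC : C.IsHermitian) (lam : Fin m → ℝ)
    (Y : Matrix (Fin n) (Fin k) 𝕂) (hY : Y ∈ FactSet A b k)
    (X' : Matrix (Fin n) (Fin n) 𝕂) (hX' : X' ∈ SDPSet A b) :
    finner C (Y * Yᴴ) - finner C X' ≤
      -(lambdaMin (C - calAstar A lam)) * RCLike.re (Matrix.trace X') +
        finner ((C - calAstar A lam) * Y) Y := by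
  obtain ⟨hX'psd, hX'b⟩ := hX'
  have hS : (C - calAstar A lam).IsHermitian := hC.sub (calAstar_isHermitian hA lam)
  have hmult : finner (calAstar A lam) (Y * Yᴴ) = finner (calAstar A lam) X' :=
    finner_calAstar_eq_of_calA_eq (funext fun i => (hY i).trans (hX'b i).symm) lam
  have hbound := lambdaMin_mul_re_trace_le hS hX'psd
  rw [finner_sub_left] at hbound
  rw [← finner_mul_conjTranspose, finner_sub_left, hmult]
  linarith

/-- for `S = C − 𝒜*(μ)`, any `Y ∈ ℳ_k` and any `X' ∈ 𝒞`,
`⟨C, YY*⟩ − ⟨C, X'⟩ ≤ −λ_min(S)·tr(X') + ⟨SY, Y⟩`. -/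
theorem gap_bound_via_lambdaMin
    {𝕂 : Type*} [RCLike 𝕂] {n m k : ℕ} (hn : 0 < n) (hm : 0 < m) (hk : 0 < k)
    (A : Fin m → Matrix (Fin n) (Fin n) 𝕂) (hA : ∀ i, (A i).IsHermitian)
    (b : Fin m → ℝ)
    (C : Matrix (Fin n) (Fin n) 𝕂) (hC : C.IsHermitian) (lam : Fin m → ℝ)
    (Y : Matrix (Fin n) (Fin k) 𝕂) (hY : Y ∈ FactSet A b k)
    (X' : Matrix (Fin n) (Fin n) 𝕂) (hX' : X' ∈ SDPSet A b) :
    finner C (Y * Yᴴ) - finner C X' ≤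
      -(lambdaMin (C - calAstar A lam)) * RCLike.re (Matrix.trace X') +
        finner ((C - calAstar A lam) * Y) Y :=
  gap_bound_via_lambdaMin_general A hA b C hC lam Y hY X' hX'

end SmoothedBM
end
end
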